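/- Let R ⊆ C(X_G, ℂ). The closed two-sided ideal of C(X_G, ℂ) generated by the set { α_t(1_{t⁻¹} · f) : f ∈ R, t ∈ G } equals the ideal { g ∈ C(X_G, ℂ) : g(ξ) = 0 for all ξ ∈ Ω_R }; in other words, writing the generated closed ideal as C₀(V) for an open subset V of X_G, one has X_G ∖ V = Ω_R. -/
import Mathlib


/-- The space `X_G`: subsets `ξ` of `G × I` (with `I = J ⊔ {0}` realized as `Option J`,
`none` playing the role of `0`), identified with points of `{0,1}^(G × I)` with the
product topology, such that `(e, 0) ∈ ξ` and `(r, i) ∈ ξ` implies `(r, 0) ∈ ξ`. -/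
def XG (G : Type*) [Group G] (J : Type*) : Set ((G × Option J) → Bool) :=
  {ξ | ξ (1, none) = true ∧ ∀ (r : G) (i : Option J), ξ (r, i) = true → ξ (r, none) = true}

/-- `X_G` is closed in the compact product space `{0,1}^(G × I)`. -/
theorem XG_isClosed (G : Type*) [Group G] (J : Type*) : IsClosed (XG G J) := by
  have key : ∀ x : G × Option J, IsClopen {ξ : (G × Option J) → Bool | ξ x = true} :=
    fun x => (isClopen_discrete {true}).preimage (continuous_apply x)
  have hXG : XG G J = {ξ : (G × Option J) → Bool | ξ (1, none) = true} ∩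
      ⋂ (r : G), ⋂ (i : Option J),
        ({ξ : (G × Option J) → Bool | ξ (r, i) = true}ᶜ ∪
          {ξ : (G × Option J) → Bool | ξ (r, none) = true}) := by
    ext ξ
    simp only [XG, Set.mem_setOf_eq, Set.mem_inter_iff, Set.mem_iInter, Set.mem_union,
      Set.mem_compl_iff]
    refine and_congr Iff.rfl ?_
    refine forall_congr' fun r => forall_congr' fun i => ?_
    tauto
  rw [hXG]
  exact (key _).isClosed.inter (isClosed_iInter fun r => isClosed_iInter fun i =>
    ((key _).compl.isClosed.union (key _).isClosed))

/-- `X_G` is compact. -/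
instance (G : Type*) [Group G] (J : Type*) : CompactSpace (XG G J) :=
  isCompact_iff_compactSpace.mp ((XG_isClosed G J).isCompact)

/-- The translate `tξ = { (t r, i) : (r, i) ∈ ξ }`: `(g, i) ∈ tξ` iff `(t⁻¹ g, i) ∈ ξ`. -/
def act {G : Type*} [Group G] {J : Type*} (t : G) (ξ : (G × Option J) → Bool) :
    (G × Option J) → Bool :=
  fun x => ξ (t⁻¹ * x.1, x.2)

/-- If `ξ ∈ X_G` and `(t, 0) ∈ ξ`, then `t⁻¹ξ ∈ X_G`. -/
theorem act_inv_mem {G : Type*} [Group G] {J : Type*} {t : G}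
    {ξ : (G × Option J) → Bool} (hξ : ξ ∈ XG G J) (h : ξ (t, none) = true) :
    act t⁻¹ ξ ∈ XG G J := by
  constructor
  · show ξ (t⁻¹⁻¹ * 1, none) = true
    rw [inv_inv, mul_one]; exact h
  · intro r i hri
    exact hξ.2 _ _ hri

/-- The characteristic function `1_{r^i} : ξ ↦ [ (r,i) ∈ ξ ]`, for `x = (r, i) ∈ G × I`,
as an element of `C(X_G, ℂ)`. -/
noncomputable def chiG {G : Type*} [Group G] {J : Type*} (x : G × Option J) :
    C(XG G J, ℂ) :=
  ⟨fun ξ => if (ξ : (G × Option J) → Bool) x = true then 1 else 0, by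
    have h1 : Continuous fun ξ : XG G J => (ξ : (G × Option J) → Bool) x :=
      (continuous_apply x).comp continuous_subtype_val
    exact (continuous_of_discreteTopology
      (f := fun b : Bool => if b = true then (1 : ℂ) else 0)).comp h1⟩

/-- For `t ∈ G` and `f ∈ C(X_G, ℂ)`, the function `α_t(f) : X_G → ℂ` which is equal to
`f ∘ θ_{t⁻¹}` on `X_t = { ξ ∈ X_G : (t,0) ∈ ξ }` and `0` off `X_t`. -/
noncomputable def alphaMap {G : Type*} [Group G] {J : Type*} (t : G)
    (f : C(XG G J, ℂ)) : XG G J → ℂ :=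
  fun ξ => if h : (ξ : (G × Option J) → Bool) (t, none) = true then
    f ⟨act t⁻¹ (ξ : (G × Option J) → Bool), act_inv_mem ξ.2 h⟩ else 0

/-- Given `R ⊆ C(X_G, ℂ)`, the set
`Ω_R = { ξ ∈ X_G : f(t⁻¹ξ) = 0 for every f ∈ R and every t ∈ G with (t,0) ∈ ξ }`. -/
def OmegaR {G : Type*} [Group G] {J : Type*} (R : Set C(XG G J, ℂ)) :
    Set (XG G J) :=
  {ξ | ∀ f ∈ R, ∀ t : G, ∀ h : (ξ : (G × Option J) → Bool) (t, none) = true,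
    f ⟨act t⁻¹ (ξ : (G × Option J) → Bool), act_inv_mem ξ.2 h⟩ = 0}


/-- Total continuous extension of `θ_{t⁻¹}`: identity off `X_t`. -/
noncomputable def PhiMap {G : Type*} [Group G] {J : Type*} (t : G) (ξ : XG G J) : XG G J :=
  if h : (ξ : (G × Option J) → Bool) (t, none) = true then
    ⟨act t⁻¹ (ξ : (G × Option J) → Bool), act_inv_mem ξ.2 h⟩ else ξ

theorem PhiMap_coe {G : Type*} [Group G] {J : Type*} (t : G) (ξ : XG G J)
    (x : G × Option J) :
    ((PhiMap t ξ : XG G J) : (G × Option J) → Bool) x =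
      if (ξ : (G × Option J) → Bool) (t, none) = true then
        (ξ : (G × Option J) → Bool) (t * x.1, x.2)
      else (ξ : (G × Option J) → Bool) x := by
  unfold PhiMap
  split_ifs with h
  · show (ξ : (G × Option J) → Bool) (t⁻¹⁻¹ * x.1, x.2) = _
    rw [inv_inv]
  · rfl

theorem PhiMap_continuous {G : Type*} [Group G] {J : Type*} (t : G) :
    Continuous (PhiMap (G := G) (J := J) t) := by
  rw [continuous_induced_rng]
  refine continuous_pi fun x => ?_
  simp only [Function.comp]
  have heq : (fun ξ : XG G J => ((PhiMap t ξ : XG G J) : (G × Option J) → Bool) x) =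
      (fun p : Bool × Bool × Bool => if p.1 = true then p.2.1 else p.2.2) ∘
        (fun ξ : XG G J => ((ξ : (G × Option J) → Bool) (t, none),
          (ξ : (G × Option J) → Bool) (t * x.1, x.2),
          (ξ : (G × Option J) → Bool) x)) := by
    funext ξ
    simp [PhiMap_coe]
  rw [heq]
  exact continuous_of_discreteTopology.comp
    ((((continuous_apply _).comp continuous_subtype_val).prodMk
      (((continuous_apply _).comp continuous_subtype_val).prodMk
        ((continuous_apply _).comp continuous_subtype_val))))

/-- `alphaMap t f` as a continuous map. -/
noncomputable def alphaCM {G : Type*} [Group G] {J : Type*} (t : G)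
    (f : C(XG G J, ℂ)) : C(XG G J, ℂ) :=
  chiG (t, none) * f.comp ⟨PhiMap t, PhiMap_continuous t⟩

theorem alphaCM_coe {G : Type*} [Group G] {J : Type*} (t : G) (f : C(XG G J, ℂ)) :
    ⇑(alphaCM t f) = alphaMap t f := by
  funext ξ
  show chiG (t, none) ξ * f (PhiMap t ξ) = alphaMap t f ξ
  unfold alphaMap PhiMap chiG
  by_cases h : (ξ : (G × Option J) → Bool) (t, none) = true
  · simp [h]
  · simp [h]

/-- Let `R ⊆ C(X_G, ℂ)`.  The closed (two-sided) ideal of `C(X_G, ℂ)` generated by the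
set `{ α_t(1_{t⁻¹} · f) : f ∈ R, t ∈ G }` equals the ideal
`{ g ∈ C(X_G, ℂ) : g(ξ) = 0 for all ξ ∈ Ω_R }`. -/
theorem closure_span_eq_vanishing_ideal (G : Type*) [Group G] (J : Type*)
    (R : Set C(XG G J, ℂ)) :
    ((Ideal.span {g : C(XG G J, ℂ) |
        ∃ t : G, ∃ f ∈ R, ⇑g = alphaMap t (chiG (t⁻¹, none) * f)}).closure :
      Set C(XG G J, ℂ)) =
    {g : C(XG G J, ℂ) | ∀ ξ ∈ OmegaR R, g ξ = 0} := by
  classical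
  set S : Set C(XG G J, ℂ) :=
    {g | ∃ t : G, ∃ f ∈ R, ⇑g = alphaMap t (chiG (t⁻¹, none) * f)} with hS
  have hgen : ∀ (t : G) (f : C(XG G J, ℂ)) (ξ : XG G J),
      alphaMap t (chiG (t⁻¹, none) * f) ξ =
        if h : (ξ : (G × Option J) → Bool) (t, none) = true then
          f ⟨act t⁻¹ (ξ : (G × Option J) → Bool), act_inv_mem ξ.2 h⟩ else 0 := by
    intro t f ξ
    unfold alphaMap
    split_ifs with h
    · have h1 : (act t⁻¹ (ξ : (G × Option J) → Bool)) (t⁻¹, none) = true := by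
        show (ξ : (G × Option J) → Bool) (t⁻¹⁻¹ * t⁻¹, none) = true
        rw [inv_inv, mul_inv_cancel]
        exact ξ.2.1
      simp [chiG, h1]
    · rfl
  have hzero : ∀ ξ : XG G J, (∀ g ∈ S, g ξ = 0) ↔ ξ ∈ OmegaR R := by
    intro ξ
    constructor
    · intro h f hf t ht
      have hmem : alphaCM t (chiG (t⁻¹, none) * f) ∈ S :=
        ⟨t, f, hf, alphaCM_coe t _⟩
      have := h _ hmem
      rw [show (alphaCM t (chiG (t⁻¹, none) * f)) ξ
          = alphaMap t (chiG (t⁻¹, none) * f) ξ from congrFun (alphaCM_coe t _) ξ,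
        hgen t f ξ] at this
      simpa [ht] using this
    · intro hξ g hg
      obtain ⟨t, f, hf, hgeq⟩ := hg
      show (⇑g) ξ = 0
      rw [hgeq, hgen t f ξ]
      split_ifs with h
      · exact hξ f hf t h
      · rfl
  have hset : ContinuousMap.setOfIdeal (Ideal.span S) = (OmegaR R)ᶜ := by
    ext ξ
    rw [Set.mem_compl_iff, ← not_iff_not, not_not, ContinuousMap.notMem_setOfIdeal,
      ← hzero ξ]
    constructor
    · intro h g hg
      exact h (Ideal.subset_span hg)
    · intro h g hg
      have hle : Ideal.span S ≤ ContinuousMap.idealOfSet ℂ ({ξ}ᶜ : Set (XG G J)) := by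
        rw [Ideal.span_le]
        intro g' hg'
        rw [SetLike.mem_coe, ContinuousMap.mem_idealOfSet_compl_singleton]
        exact h g' hg'
      exact (ContinuousMap.mem_idealOfSet_compl_singleton ξ g).mp (hle hg)
  have hcl := ContinuousMap.idealOfSet_ofIdeal_eq_closure (𝕜 := ℂ) (Ideal.span S)
  rw [hset] at hcl
  rw [← hcl]
  ext g
  simp only [SetLike.mem_coe, ContinuousMap.mem_idealOfSet, compl_compl, Set.mem_setOf_eq]
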